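/- arXiv:1904.02703 — 4 statements merged into one kernel-verified Lean document; each statement's English description precedes it below -/
import Mathlib

section
/- Let ℓ, m, n ≥ 1, let b be an ℓ×ℓ matrix over 𝔽₂, and let A = (a_{ij}) be an m×n matrix whose entries a_{ij} are ℓ×ℓ matrices over 𝔽₂ each of which commutes with b (a_{ij}·b = b·a_{ij} for all i, j). Define the binary block matrices H_X = [A | b·I_m] (the m×(n+m) block matrix whose left part has (i,j) block a_{ij} and whose right part is block-diagonal with every diagonal block equal to b) and H_Z = [bᵀ·I_n | A*] (the n×(n+m) block matrix whose left part is block-diagonal with every diagonal block equal to bᵀ and whose right part has (i,j) block equal to (a_{ji})ᵀ). Then H_X · H_Zᵀ = 0 as binary matrices. -/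
open Matrix

/-- Let `b` be an `ℓ×ℓ` matrix over `𝔽₂` and `A = (aᵢⱼ)` an `m×n` matrix of
`ℓ×ℓ` binary blocks, each commuting with `b`.  With
`H_X = [A | b·I_m]` and `H_Z = [bᵀ·I_n | A*]` (where `A*` has `(i,j)` block `(a_{ji})ᵀ`),
one has `H_X · H_Zᵀ = 0`. -/
theorem ghp_css_commutativity (ℓ m n : ℕ) (hℓ : 1 ≤ ℓ) (hm : 1 ≤ m) (hn : 1 ≤ n)
    (b : Matrix (Fin ℓ) (Fin ℓ) (ZMod 2))
    (A : Fin m → Fin n → Matrix (Fin ℓ) (Fin ℓ) (ZMod 2))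
    (hcomm : ∀ i j, A i j * b = b * A i j)
    (HX : Matrix (Fin m × Fin ℓ) ((Fin n ⊕ Fin m) × Fin ℓ) (ZMod 2))
    (HZ : Matrix (Fin n × Fin ℓ) ((Fin n ⊕ Fin m) × Fin ℓ) (ZMod 2))
    (hHX : ∀ i p jq, HX (i, p) jq =
      match jq with
      | (Sum.inl j, q) => A i j p q
      | (Sum.inr j, q) => if i = j then b p q else 0)
    (hHZ : ∀ j p iq, HZ (j, p) iq =
      match iq with
      | (Sum.inl j', q) => if j = j' then b q p else 0
      | (Sum.inr i, q) => A i j q p) :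
    HX * HZᵀ = 0 := by
  ext ⟨i, p⟩ ⟨j, p'⟩
  simp only [mul_apply, transpose_apply, Matrix.zero_apply]
  rw [Fintype.sum_prod_type, Fintype.sum_sum_type]
  have h1 : ∑ j' : Fin n, ∑ q : Fin ℓ,
      HX (i, p) ((Sum.inl j', q)) * HZ (j, p') ((Sum.inl j', q))
      = (A i j * b) p p' := by
    rw [mul_apply]
    rw [Finset.sum_comm]
    refine Finset.sum_congr rfl fun q _ => ?_
    rw [Finset.sum_eq_single j]
    · simp [hHX, hHZ]
    · intro j' _ hj'
      simp [hHX, hHZ, Ne.symm hj']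
    · simp
  have h2 : ∑ i' : Fin m, ∑ q : Fin ℓ,
      HX (i, p) ((Sum.inr i', q)) * HZ (j, p') ((Sum.inr i', q))
      = (b * A i j) p p' := by
    rw [mul_apply]
    rw [Finset.sum_eq_single i]
    · simp [hHX, hHZ]
    · intro i' _ hi'
      simp [hHX, hHZ, Ne.symm hi']
    · simp
  rw [h1, h2, hcomm]
  have : (2 : ZMod 2) = 0 := rfl
  rw [← two_mul, this, zero_mul]
end

section
/- Let ℓ ≥ 1, let a(x), b(x) ∈ 𝔽₂[x], let A and B be the ℓ×ℓ circulant matrices over 𝔽₂ associated to a(x) and b(x), and let g(x) = gcd(a(x), b(x), xˡ − 1). Then the rank over 𝔽₂ of the ℓ×2ℓ matrix H_X = [A | B] equals ℓ − deg g(x). -/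
open Polynomial Matrix

/-- The `ℓ×ℓ` circulant matrix over `𝔽₂` associated to the polynomial `a(x)` reduced
modulo `xˡ − 1`: its `(i,j)` entry is the coefficient of `x^((i−j) mod ℓ)`. -/
noncomputable def circMat (ℓ : ℕ) (a : Polynomial (ZMod 2)) : Matrix (Fin ℓ) (Fin ℓ) (ZMod 2) :=
  Matrix.of fun i j => (a %ₘ (X ^ ℓ - 1)).coeff ((i - j : Fin ℓ) : ℕ)

namespace GBAux

variable {ℓ : ℕ}

lemma monic_f (hℓ : 1 ≤ ℓ) : (X ^ ℓ - 1 : (ZMod 2)[X]).Monic := by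
  have h := Polynomial.monic_X_pow_sub_C (1 : ZMod 2) (by omega : ℓ ≠ 0)
  simpa using h

lemma natDegree_f : (X ^ ℓ - 1 : (ZMod 2)[X]).natDegree = ℓ := by
  have h : (X ^ ℓ - C (1 : ZMod 2)).natDegree = ℓ := Polynomial.natDegree_X_pow_sub_C
  simpa using h

lemma root_pow_ell (hℓ : 1 ≤ ℓ) :
    AdjoinRoot.root (X ^ ℓ - 1 : (ZMod 2)[X]) ^ ℓ = 1 := by
  have h : AdjoinRoot.mk (X ^ ℓ - 1 : (ZMod 2)[X]) (X ^ ℓ - 1) = 0 := AdjoinRoot.mk_self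
  rw [_root_.map_sub] at h
  have h2 : AdjoinRoot.mk (X ^ ℓ - 1 : (ZMod 2)[X]) (X ^ ℓ) = 1 := by
    rw [sub_eq_zero] at h; simpa using h
  rw [_root_.map_pow, AdjoinRoot.mk_X] at h2
  exact h2

lemma root_pow_mod (hℓ : 1 ≤ ℓ) (n : ℕ) :
    AdjoinRoot.root (X ^ ℓ - 1 : (ZMod 2)[X]) ^ (n % ℓ)
      = AdjoinRoot.root (X ^ ℓ - 1 : (ZMod 2)[X]) ^ n := by
  conv_rhs => rw [← Nat.div_add_mod n ℓ]
  rw [pow_add, pow_mul, root_pow_ell hℓ, one_pow, one_mul]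

lemma mk_C_mul (q t : (ZMod 2)[X]) (c : ZMod 2) :
    AdjoinRoot.mk q (C c * t) = c • AdjoinRoot.mk q t := by
  rw [_root_.map_mul, AdjoinRoot.mk_C, Algebra.smul_def, AdjoinRoot.algebraMap_eq]

lemma mk_eq_sum (hℓ : 1 ≤ ℓ) (a : (ZMod 2)[X]) :
    AdjoinRoot.mk (X ^ ℓ - 1 : (ZMod 2)[X]) a
      = ∑ i : Fin ℓ, (a %ₘ (X ^ ℓ - 1)).coeff (i : ℕ) •
          AdjoinRoot.root (X ^ ℓ - 1 : (ZMod 2)[X]) ^ (i : ℕ) := by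
  have hmka : AdjoinRoot.mk (X ^ ℓ - 1 : (ZMod 2)[X]) a
      = AdjoinRoot.mk (X ^ ℓ - 1 : (ZMod 2)[X]) (a %ₘ (X ^ ℓ - 1)) := by
    conv_lhs => rw [← Polynomial.modByMonic_add_div a (X ^ ℓ - 1 : (ZMod 2)[X])]
    rw [_root_.map_add, _root_.map_mul, AdjoinRoot.mk_self, zero_mul, add_zero]
  have hrd : (a %ₘ (X ^ ℓ - 1) : (ZMod 2)[X]).natDegree < ℓ := by
    rcases eq_or_ne (a %ₘ (X ^ ℓ - 1) : (ZMod 2)[X]) 0 with h0 | h0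
    · simp [h0]; omega
    · have hd := Polynomial.degree_modByMonic_lt a (monic_f hℓ)
      have := Polynomial.natDegree_lt_natDegree h0 hd
      rwa [natDegree_f] at this
  rw [hmka]
  conv_lhs => rw [Polynomial.as_sum_range' _ ℓ hrd]
  rw [_root_.map_sum,
    ← Fin.sum_univ_eq_sum_range (fun i => AdjoinRoot.mk (X ^ ℓ - 1 : (ZMod 2)[X])
      (Polynomial.monomial i ((a %ₘ (X ^ ℓ - 1)).coeff i))) ℓ]
  refine Finset.sum_congr rfl fun i _ => ?_
  rw [← Polynomial.C_mul_X_pow_eq_monomial, mk_C_mul, _root_.map_pow, AdjoinRoot.mk_X]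

lemma circ_sum (hℓ : 1 ≤ ℓ) (a : (ZMod 2)[X]) (u : Fin ℓ → ZMod 2) :
    ∑ i : Fin ℓ, ((circMat ℓ a) *ᵥ u) i • AdjoinRoot.root (X ^ ℓ - 1 : (ZMod 2)[X]) ^ (i : ℕ)
      = AdjoinRoot.mk (X ^ ℓ - 1) a *
          ∑ j : Fin ℓ, u j • AdjoinRoot.root (X ^ ℓ - 1 : (ZMod 2)[X]) ^ (j : ℕ) := by
  haveI : NeZero ℓ := ⟨by omega⟩
  have key : ∀ j : Fin ℓ,
      ∑ i : Fin ℓ, ((a %ₘ (X ^ ℓ - 1)).coeff ((i - j : Fin ℓ) : ℕ) * u j) •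
          AdjoinRoot.root (X ^ ℓ - 1 : (ZMod 2)[X]) ^ (i : ℕ)
        = AdjoinRoot.mk (X ^ ℓ - 1) a *
            (u j • AdjoinRoot.root (X ^ ℓ - 1 : (ZMod 2)[X]) ^ (j : ℕ)) := by
    intro j
    rw [mk_eq_sum hℓ a, Finset.sum_mul]
    refine (Fintype.sum_equiv (Equiv.addRight j) _ _ fun k => ?_).symm
    have h1 : ((Equiv.addRight j) k - j : Fin ℓ) = k := by
      simp [Equiv.addRight]
    have h2 : AdjoinRoot.root (X ^ ℓ - 1 : (ZMod 2)[X]) ^ (((Equiv.addRight j) k : Fin ℓ) : ℕ)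
        = AdjoinRoot.root (X ^ ℓ - 1 : (ZMod 2)[X]) ^ (k : ℕ) *
            AdjoinRoot.root (X ^ ℓ - 1 : (ZMod 2)[X]) ^ (j : ℕ) := by
      have : (((Equiv.addRight j) k : Fin ℓ) : ℕ) = ((k : ℕ) + (j : ℕ)) % ℓ := by
        simp [Equiv.addRight, Fin.val_add]
      rw [this, root_pow_mod hℓ, pow_add]
    rw [h1, h2, smul_mul_smul_comm]
  have lhs_eq : ∑ i : Fin ℓ,
      ((circMat ℓ a) *ᵥ u) i • AdjoinRoot.root (X ^ ℓ - 1 : (ZMod 2)[X]) ^ (i : ℕ)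
      = ∑ j : Fin ℓ, ∑ i : Fin ℓ, ((a %ₘ (X ^ ℓ - 1)).coeff ((i - j : Fin ℓ) : ℕ) * u j) •
          AdjoinRoot.root (X ^ ℓ - 1 : (ZMod 2)[X]) ^ (i : ℕ) := by
    rw [Finset.sum_comm]
    refine Finset.sum_congr rfl fun i _ => ?_
    rw [Matrix.mulVec, dotProduct, Finset.sum_smul]
    rfl
  rw [lhs_eq, Finset.mul_sum]
  exact Finset.sum_congr rfl fun j _ => key j

end GBAux

/-- For circulants `A`, `B` associated to `a(x)`, `b(x)` and
`g(x) = gcd(a(x), b(x), xˡ − 1)`, the rank over `𝔽₂` of `H_X = [A | B]`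
equals `ℓ − deg g(x)`. -/
theorem gb_HX_rank (ℓ : ℕ) (hℓ : 1 ≤ ℓ) (a b g : Polynomial (ZMod 2))
    (hg : g = EuclideanDomain.gcd a (EuclideanDomain.gcd b (X ^ ℓ - 1))) :
    (Matrix.fromCols (circMat ℓ a) (circMat ℓ b)).rank = ℓ - g.natDegree := by
  classical
  haveI : NeZero ℓ := ⟨by omega⟩
  set f : (ZMod 2)[X] := X ^ ℓ - 1 with hfdef
  have hfm : f.Monic := GBAux.monic_f hℓ
  have hf0 : f ≠ 0 := hfm.ne_zero
  have hfdeg : f.natDegree = ℓ := GBAux.natDegree_f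
  -- the power basis and the linear equivalence E
  let pb := AdjoinRoot.powerBasis hf0
  have hdim : pb.dim = ℓ := by rw [AdjoinRoot.powerBasis_dim, hfdeg]
  let bb : Module.Basis (Fin ℓ) (ZMod 2) (AdjoinRoot f) := pb.basis.reindex (finCongr hdim)
  let E : (Fin ℓ → ZMod 2) ≃ₗ[ZMod 2] AdjoinRoot f := bb.equivFun.symm
  have hE : ∀ v : Fin ℓ → ZMod 2,
      E v = ∑ i : Fin ℓ, v i • AdjoinRoot.root f ^ (i : ℕ) := by
    intro v
    show bb.equivFun.symm v = _
    rw [Module.Basis.equivFun_symm_apply]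
    refine Finset.sum_congr rfl fun i _ => ?_
    congr 1
    show (pb.basis.reindex (finCongr hdim)) i = _
    rw [Module.Basis.reindex_apply, PowerBasis.coe_basis, AdjoinRoot.powerBasis_gen]
    rfl
  have hkey : ∀ (p : (ZMod 2)[X]) (u : Fin ℓ → ZMod 2),
      E ((circMat ℓ p).mulVecLin u) = AdjoinRoot.mk f p * E u := by
    intro p u
    rw [Matrix.mulVecLin_apply, hE, hE]
    exact GBAux.circ_sum hℓ p u
  have hconj : ∀ p : (ZMod 2)[X],
      Submodule.map (E : (Fin ℓ → ZMod 2) →ₗ[ZMod 2] AdjoinRoot f)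
          (LinearMap.range (circMat ℓ p).mulVecLin)
        = LinearMap.range (LinearMap.mulLeft (ZMod 2) (AdjoinRoot.mk f p)) := by
    intro p
    apply le_antisymm
    · rintro x ⟨y, ⟨u, rfl⟩, rfl⟩
      exact ⟨E u, (hkey p u).symm⟩
    · rintro x ⟨y, rfl⟩
      obtain ⟨u, rfl⟩ := E.surjective y
      refine ⟨(circMat ℓ p).mulVecLin u, ⟨u, rfl⟩, ?_⟩
      simpa using hkey p u
  -- range of fromColumns is the sup
  set A := circMat ℓ a with hA
  set B := circMat ℓ b with hB
  have hcols : LinearMap.range (Matrix.fromCols A B).mulVecLin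
      = LinearMap.range A.mulVecLin ⊔ LinearMap.range B.mulVecLin := by
    apply le_antisymm
    · rintro x ⟨u, rfl⟩
      have h1 : (Matrix.fromCols A B).mulVecLin u
          = A *ᵥ (u ∘ Sum.inl) + B *ᵥ (u ∘ Sum.inr) := by
        rw [Matrix.mulVecLin_apply, ← Matrix.fromCols_mulVec_sumElim,
          Sum.elim_comp_inl_inr]
      rw [h1]
      exact Submodule.add_mem_sup ⟨u ∘ Sum.inl, rfl⟩ ⟨u ∘ Sum.inr, rfl⟩
    · refine sup_le ?_ ?_
      · rintro x ⟨u, rfl⟩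
        exact ⟨Sum.elim u 0, by
          rw [Matrix.mulVecLin_apply, Matrix.fromCols_mulVec_sumElim]
          simp⟩
      · rintro x ⟨u, rfl⟩
        exact ⟨Sum.elim 0 u, by
          rw [Matrix.mulVecLin_apply, Matrix.fromCols_mulVec_sumElim]
          simp⟩
  -- divisibility facts
  have hgdvda : g ∣ a := hg ▸ EuclideanDomain.gcd_dvd_left a _
  have hgdvdbf : g ∣ EuclideanDomain.gcd b f := hg ▸ EuclideanDomain.gcd_dvd_right a _
  have hgdvdb : g ∣ b := hgdvdbf.trans (EuclideanDomain.gcd_dvd_left b f)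
  have hgdvdf : g ∣ f := hgdvdbf.trans (EuclideanDomain.gcd_dvd_right b f)
  obtain ⟨h, hfh⟩ := hgdvdf
  have hg0 : g ≠ 0 := fun h0 => hf0 (by rw [hfh, h0, zero_mul])
  have hh0 : h ≠ 0 := fun h0 => hf0 (by rw [hfh, h0, mul_zero])
  have hmonic : ∀ p : (ZMod 2)[X], p ≠ 0 → p.Monic := by
    intro p hp
    have hlc : p.leadingCoeff ≠ 0 := Polynomial.leadingCoeff_ne_zero.mpr hp
    have hzm : ∀ x : ZMod 2, x ≠ 0 → x = 1 := by decide
    exact hzm _ hlc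
  have hhm : h.Monic := hmonic h hh0
  -- Bezout in AdjoinRoot f
  set aa := AdjoinRoot.mk f a with haa
  set bbq := AdjoinRoot.mk f b with hbbq
  set gg := AdjoinRoot.mk f g with hgg
  have hbez : ∃ u v : AdjoinRoot f, gg = aa * u + bbq * v := by
    have h1 : g = a * EuclideanDomain.gcdA a (EuclideanDomain.gcd b f)
        + EuclideanDomain.gcd b f * EuclideanDomain.gcdB a (EuclideanDomain.gcd b f) := by
      rw [hg]; exact EuclideanDomain.gcd_eq_gcd_ab a _
    have h2 : EuclideanDomain.gcd b f = b * EuclideanDomain.gcdA b f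
        + f * EuclideanDomain.gcdB b f := EuclideanDomain.gcd_eq_gcd_ab b f
    refine ⟨AdjoinRoot.mk f (EuclideanDomain.gcdA a (EuclideanDomain.gcd b f)),
      AdjoinRoot.mk f (EuclideanDomain.gcdA b f) *
        AdjoinRoot.mk f (EuclideanDomain.gcdB a (EuclideanDomain.gcd b f)), ?_⟩
    have e1 : gg = aa * AdjoinRoot.mk f (EuclideanDomain.gcdA a (EuclideanDomain.gcd b f))
        + AdjoinRoot.mk f (EuclideanDomain.gcd b f) *
          AdjoinRoot.mk f (EuclideanDomain.gcdB a (EuclideanDomain.gcd b f)) := by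
      rw [hgg]
      conv_lhs => rw [h1]
      rw [_root_.map_add, _root_.map_mul, _root_.map_mul, haa]
    have e2 : AdjoinRoot.mk f (EuclideanDomain.gcd b f)
        = bbq * AdjoinRoot.mk f (EuclideanDomain.gcdA b f) := by
      conv_lhs => rw [h2]
      rw [_root_.map_add, _root_.map_mul, _root_.map_mul, AdjoinRoot.mk_self,
        zero_mul, add_zero, hbbq]
    rw [e1, e2, mul_assoc]
  -- sup of ranges equals range of mulLeft gg
  have hsup : LinearMap.range (LinearMap.mulLeft (ZMod 2) aa)
      ⊔ LinearMap.range (LinearMap.mulLeft (ZMod 2) bbq)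
      = LinearMap.range (LinearMap.mulLeft (ZMod 2) gg) := by
    apply le_antisymm
    · refine sup_le ?_ ?_
      · rintro x ⟨y, rfl⟩
        obtain ⟨c, hc⟩ := hgdvda
        refine ⟨AdjoinRoot.mk f c * y, ?_⟩
        simp only [LinearMap.mulLeft_apply]
        rw [haa, hc, _root_.map_mul, hgg, mul_assoc]
      · rintro x ⟨y, rfl⟩
        obtain ⟨c, hc⟩ := hgdvdb
        refine ⟨AdjoinRoot.mk f c * y, ?_⟩
        simp only [LinearMap.mulLeft_apply]
        rw [hbbq, hc, _root_.map_mul, hgg, mul_assoc]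
    · rintro x ⟨y, rfl⟩
      obtain ⟨u, v, huv⟩ := hbez
      simp only [LinearMap.mulLeft_apply]
      rw [huv, add_mul, mul_assoc, mul_assoc]
      exact Submodule.add_mem_sup ⟨u * y, rfl⟩ ⟨v * y, rfl⟩
  -- dimension of range of mulLeft gg
  set m := h.natDegree with hm
  have hdeg_split : g.natDegree + m = ℓ := by
    rw [hm, ← Polynomial.natDegree_mul hg0 hh0, ← hfh, hfdeg]
  set v : Fin m → AdjoinRoot f := fun i => AdjoinRoot.mk f (g * X ^ (i : ℕ)) with hv
  have hspan : LinearMap.range (LinearMap.mulLeft (ZMod 2) gg)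
      = Submodule.span (ZMod 2) (Set.range v) := by
    apply le_antisymm
    · rintro x ⟨y, rfl⟩
      obtain ⟨p, rfl⟩ := AdjoinRoot.mk_surjective (g := f) y
      simp only [LinearMap.mulLeft_apply]
      have hgp : gg * AdjoinRoot.mk f p = AdjoinRoot.mk f (g * (p %ₘ h)) := by
        rw [hgg, ← _root_.map_mul]
        have hx : g * p = f * (p /ₘ h) + g * (p %ₘ h) := by
          conv_lhs => rw [← Polynomial.modByMonic_add_div p h]
          rw [hfh]; ring
        rw [hx, _root_.map_add, _root_.map_mul, AdjoinRoot.mk_self, zero_mul, zero_add]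
      rw [hgp]
      rcases eq_or_ne (p %ₘ h) 0 with h0 | h0
      · rw [h0, mul_zero, map_zero]; exact Submodule.zero_mem _
      · have hsd : (p %ₘ h).natDegree < m :=
          Polynomial.natDegree_lt_natDegree h0 (Polynomial.degree_modByMonic_lt p hhm)
        have hsum := Polynomial.as_sum_range' (p %ₘ h) m hsd
        rw [hsum, Finset.mul_sum, _root_.map_sum]
        refine Submodule.sum_mem _ fun i hi => ?_
        rw [Finset.mem_range] at hi
        have heq : AdjoinRoot.mk f (g * Polynomial.monomial i ((p %ₘ h).coeff i))
            = ((p %ₘ h).coeff i) • v ⟨i, hi⟩ := by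
          rw [← Polynomial.C_mul_X_pow_eq_monomial,
            show g * (C ((p %ₘ h).coeff i) * X ^ i) = C ((p %ₘ h).coeff i) * (g * X ^ i) from
              by ring, GBAux.mk_C_mul]
        rw [heq]
        exact Submodule.smul_mem _ _ (Submodule.subset_span ⟨⟨i, hi⟩, rfl⟩)
    · rw [Submodule.span_le]
      rintro x ⟨i, rfl⟩
      refine ⟨AdjoinRoot.mk f (X ^ (i : ℕ)), ?_⟩
      simp only [LinearMap.mulLeft_apply, hv, hgg, ← _root_.map_mul]
  have hli : LinearIndependent (ZMod 2) v := by
    rw [Fintype.linearIndependent_iff]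
    intro c hc i
    set q : (ZMod 2)[X] := ∑ j : Fin m, C (c j) * X ^ (j : ℕ) with hq
    have hmkq : AdjoinRoot.mk f (g * q) = 0 := by
      rw [hq, Finset.mul_sum, _root_.map_sum, ← hc]
      refine Finset.sum_congr rfl fun j _ => ?_
      rw [show g * (C (c j) * X ^ (j : ℕ)) = C (c j) * (g * X ^ (j : ℕ)) from by ring,
        GBAux.mk_C_mul]
    have hdvd : f ∣ g * q := by rwa [AdjoinRoot.mk_eq_zero] at hmkq
    have hhq : h ∣ q := by
      rw [hfh] at hdvd
      exact (mul_dvd_mul_iff_left hg0).mp hdvd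
    have hqdeg : q.degree < h.degree := by
      rw [Polynomial.degree_eq_natDegree hh0]
      refine lt_of_le_of_lt (Polynomial.degree_sum_le _ _) ?_
      rw [Finset.sup_lt_iff (by exact_mod_cast WithBot.bot_lt_coe m)]
      intro j _
      exact lt_of_le_of_lt (Polynomial.degree_C_mul_X_pow_le _ _)
        (by exact_mod_cast j.isLt)
    have hq0 : q = 0 := Polynomial.eq_zero_of_dvd_of_degree_lt hhq hqdeg
    have hci : q.coeff (i : ℕ) = c i := by
      rw [hq, Polynomial.finset_sum_coeff, Finset.sum_eq_single i]
      · simp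
      · intro j _ hji
        have hne : (i : ℕ) ≠ (j : ℕ) := fun hij => hji (Fin.ext hij.symm)
        simp [Polynomial.coeff_C_mul, Polynomial.coeff_X_pow, hne]
      · intro hi; exact absurd (Finset.mem_univ i) hi
    rw [hq0] at hci
    simpa using hci.symm
  have hfinrank : Module.finrank (ZMod 2)
      (LinearMap.range (LinearMap.mulLeft (ZMod 2) gg)) = m := by
    rw [hspan, finrank_span_eq_card hli, Fintype.card_fin]
  -- assemble
  have hrank : (Matrix.fromCols A B).rank
      = Module.finrank (ZMod 2)
          (LinearMap.range (Matrix.fromCols A B).mulVecLin) := rfl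
  rw [hrank, ← LinearEquiv.finrank_map_eq E, hcols, Submodule.map_sup, hconj a, hconj b]
  rw [hA, hB] at *
  rw [← haa, ← hbbq] at *
  rw [hsup, hfinrank]
  omega
end

section
/- Let ℓ ≥ 1, let a(x), b(x) ∈ 𝔽₂[x], let A and B be the ℓ×ℓ circulant matrices over 𝔽₂ associated to a(x) and b(x), and let g(x) = gcd(a(x), b(x), xˡ − 1). Then the rank over 𝔽₂ of the ℓ×2ℓ matrix H_Z = [Bᵀ | Aᵀ] equals ℓ − deg g(x). -/
open Polynomial Matrix

namespace GbAux

open Fin.NatCast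

lemma monicP {n : ℕ} (hn : n ≠ 0) : ((X : (ZMod 2)[X]) ^ n - 1).Monic := by
  simpa using monic_X_pow_sub_C (1 : ZMod 2) hn

lemma degP {n : ℕ} (hn : n ≠ 0) : ((X : (ZMod 2)[X]) ^ n - 1).degree = n := by
  simpa using degree_X_pow_sub_C (Nat.pos_of_ne_zero hn) (1 : ZMod 2)

lemma Xpow_mod {n : ℕ} (hn : n ≠ 0) (m : ℕ) :
    (X : (ZMod 2)[X]) ^ m %ₘ (X ^ n - 1) = X ^ (m % n) := by
  obtain ⟨c, hc⟩ := sub_dvd_pow_sub_pow ((X : (ZMod 2)[X]) ^ n) 1 (m / n)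
  have h1 : (X : (ZMod 2)[X]) ^ m = X ^ (m % n) + (X ^ n - 1) * (X ^ (m % n) * c) := by
    have h2 : (X : (ZMod 2)[X]) ^ m = X ^ (m % n) * ((X ^ n) ^ (m / n)) := by
      rw [← pow_mul, ← pow_add, Nat.mod_add_div]
    rw [h2]
    linear_combination (X : (ZMod 2)[X]) ^ (m % n) * hc
  rw [h1, add_modByMonic, (modByMonic_eq_zero_iff_dvd (monicP hn)).2 ⟨_, rfl⟩, add_zero,
    (modByMonic_eq_self_iff (monicP hn)).2]
  rw [degP hn, degree_X_pow]
  exact_mod_cast Nat.mod_lt m (Nat.pos_of_ne_zero hn)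

lemma mon_mod {n : ℕ} (hn : n ≠ 0) (m : ℕ) (c : ZMod 2) :
    (monomial m c : (ZMod 2)[X]) %ₘ (X ^ n - 1) = c • X ^ (m % n) := by
  rw [← smul_X_eq_monomial, smul_modByMonic, Xpow_mod hn]

lemma val_eq_mod_iff {n : ℕ} [NeZero n] (x : Fin n) (m : ℕ) :
    (x : ℕ) = m % n ↔ x = (m : Fin n) := by
  rw [Fin.ext_iff, Fin.val_natCast]

lemma circ_mulVec {n : ℕ} [NeZero n] (a p : (ZMod 2)[X]) :
    (circMat n a).mulVec (fun i : Fin n => (p %ₘ (X ^ n - 1)).coeff (i : ℕ)) =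
      fun i : Fin n => ((a * p) %ₘ (X ^ n - 1)).coeff (i : ℕ) := by
  have hn : n ≠ 0 := NeZero.ne n
  induction a using Polynomial.induction_on' with
  | add a1 a2 h1 h2 =>
    have hc : circMat n (a1 + a2) = circMat n a1 + circMat n a2 := by
      ext i j; simp [circMat, add_modByMonic]
    rw [hc, Matrix.add_mulVec, h1, h2]
    funext i; simp [add_mul, add_modByMonic]
  | monomial k c =>
    induction p using Polynomial.induction_on' with
    | add p1 p2 h1 h2 =>
      have hv : (fun i : Fin n => ((p1 + p2) %ₘ (X ^ n - 1)).coeff i) =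
          (fun i : Fin n => (p1 %ₘ (X ^ n - 1)).coeff i) +
          (fun i : Fin n => (p2 %ₘ (X ^ n - 1)).coeff i) := by
        funext i; simp [add_modByMonic]
      rw [hv, Matrix.mulVec_add, h1, h2]
      funext i; simp [mul_add, add_modByMonic]
    | monomial j e =>
      funext i
      rw [monomial_mul_monomial]
      simp only [Matrix.mulVec, dotProduct, circMat, Matrix.of_apply, mon_mod hn]
      simp only [coeff_smul, coeff_X_pow, smul_eq_mul]
      have key : ∀ (x : Fin n) (m : ℕ), ((x : ℕ) = m % n) = (x = (m : Fin n)) := by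
        intro x m; rw [eq_iff_iff]; exact val_eq_mod_iff x m
      simp only [key]
      simp only [mul_ite, ite_mul, mul_one, mul_zero, zero_mul, one_mul,
        Finset.sum_ite_eq' Finset.univ]
      simp only [Finset.mem_univ, if_true]
      have hiff : (i - (j : Fin n) = (k : Fin n)) = (i = ((k + j : ℕ) : Fin n)) := by
        rw [eq_iff_iff, sub_eq_iff_eq_add, Nat.cast_add]
      simp only [hiff]

lemma eq_zero_of_coeffs {n : ℕ} (r : (ZMod 2)[X]) (h : r.degree < (n : ℕ))
    (hc : ∀ i : Fin n, r.coeff i = 0) : r = 0 := by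
  ext i
  by_cases hi : i < n
  · simpa using hc ⟨i, hi⟩
  · rw [coeff_eq_zero_of_degree_lt (lt_of_lt_of_le h (by exact_mod_cast Nat.le_of_not_lt hi))]
    simp

end GbAux

open GbAux

/-- For circulants `A`, `B` associated to `a(x)`, `b(x)` and
`g(x) = gcd(a(x), b(x), xˡ − 1)`, the rank over `𝔽₂` of `H_Z = [Bᵀ | Aᵀ]`
equals `ℓ − deg g(x)`. -/
theorem gb_HZ_rank (ℓ : ℕ) (hℓ : 1 ≤ ℓ) (a b g : Polynomial (ZMod 2))
    (hg : g = EuclideanDomain.gcd a (EuclideanDomain.gcd b (X ^ ℓ - 1))) :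
    (Matrix.fromCols (circMat ℓ b)ᵀ (circMat ℓ a)ᵀ).rank = ℓ - g.natDegree := by
  classical
  have hn : ℓ ≠ 0 := by omega
  haveI : NeZero ℓ := ⟨hn⟩
  set P : (ZMod 2)[X] := X ^ ℓ - 1 with hPdef
  have hPm : P.Monic := monicP hn
  have hPd : P.degree = ℓ := degP hn
  have hP0 : P ≠ 0 := hPm.ne_zero
  have hPnd : P.natDegree = ℓ := natDegree_eq_of_degree_eq_some hPd
  -- divisibility facts
  have hga : g ∣ a := by rw [hg]; exact EuclideanDomain.gcd_dvd_left _ _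
  have hgb : g ∣ b := by
    rw [hg]; exact (EuclideanDomain.gcd_dvd_right _ _).trans (EuclideanDomain.gcd_dvd_left _ _)
  have hgP : g ∣ P := by
    rw [hg]; exact (EuclideanDomain.gcd_dvd_right _ _).trans (EuclideanDomain.gcd_dvd_right _ _)
  have hg0 : g ≠ 0 := by rintro rfl; exact hP0 (zero_dvd_iff.mp hgP)
  obtain ⟨q, hq⟩ := hgP
  have hq0 : q ≠ 0 := by rintro rfl; rw [mul_zero] at hq; exact hP0 hq
  have hdeg : g.natDegree + q.natDegree = ℓ := by
    rw [← hPnd, hq, natDegree_mul hg0 hq0]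
  set d := g.natDegree with hd
  -- Bezout: P ∣ a*p → P ∣ b*p → P ∣ g*p
  have bezout : ∀ p : (ZMod 2)[X], P ∣ a * p → P ∣ b * p → P ∣ g * p := by
    intro p hap hbp
    have h1 := EuclideanDomain.gcd_eq_gcd_ab a (EuclideanDomain.gcd b P)
    have h2 := EuclideanDomain.gcd_eq_gcd_ab b P
    rw [← hg] at h1
    have : g * p = (a * p) * EuclideanDomain.gcdA a (EuclideanDomain.gcd b P) +
        ((b * p) * (EuclideanDomain.gcdA b P *
          EuclideanDomain.gcdB a (EuclideanDomain.gcd b P)) +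
         P * (EuclideanDomain.gcdB b P *
          EuclideanDomain.gcdB a (EuclideanDomain.gcd b P) * p)) := by
      rw [h1, h2]; ring
    rw [this]
    exact dvd_add (hap.mul_right _) (dvd_add (hbp.mul_right _) (Dvd.intro _ rfl))
  -- reduce to fromRows
  have hrt : (Matrix.fromCols (circMat ℓ b)ᵀ (circMat ℓ a)ᵀ).rank =
      (Matrix.fromRows (circMat ℓ b) (circMat ℓ a)).rank := by
    rw [← Matrix.transpose_fromRows, Matrix.rank_transpose]
  rw [hrt]
  set M := Matrix.fromRows (circMat ℓ b) (circMat ℓ a) with hM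
  -- the kernel
  set K := LinearMap.ker M.mulVecLin with hK
  -- the injection from degreeLT d
  set L : degreeLT (ZMod 2) d →ₗ[ZMod 2] (Fin ℓ → ZMod 2) :=
    (LinearMap.pi fun i : Fin ℓ => lcoeff (ZMod 2) (i : ℕ)) ∘ₗ
      (LinearMap.mulLeft (ZMod 2) q) ∘ₗ (degreeLT (ZMod 2) d).subtype with hL
  have hLapp : ∀ w : degreeLT (ZMod 2) d, L w = fun i : Fin ℓ => (q * (w : (ZMod 2)[X])).coeff (i : ℕ) := by
    intro w; rfl
  have hdq : ∀ w : degreeLT (ZMod 2) d, (q * (w : (ZMod 2)[X])).degree < (ℓ : ℕ) := by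
    rintro ⟨w, hw⟩
    rcases eq_or_ne w 0 with rfl | hw0
    · simp only [mul_zero, degree_zero]; exact WithBot.bot_lt_coe _
    · have hnd : w.natDegree < d := (natDegree_lt_iff_degree_lt hw0).2 (mem_degreeLT.1 hw)
      have : (q * w) ≠ 0 := mul_ne_zero hq0 hw0
      rw [← natDegree_lt_iff_degree_lt this, natDegree_mul hq0 hw0]
      omega
  have hLinj : Function.Injective L := by
    rw [← LinearMap.ker_eq_bot, Submodule.eq_bot_iff]
    rintro w hw
    rw [LinearMap.mem_ker] at hw
    have hzero : q * (w : (ZMod 2)[X]) = 0 := by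
      refine eq_zero_of_coeffs _ (hdq w) fun i => ?_
      have := congrFun (hLapp w ▸ hw) i
      simpa using this
    have : (w : (ZMod 2)[X]) = 0 := by
      rcases mul_eq_zero.1 hzero with h | h
      · exact absurd h hq0
      · exact h
    exact Subtype.ext this
  have hrange : LinearMap.range L = K := by
    ext x
    constructor
    · rintro ⟨w, rfl⟩
      rw [hK, LinearMap.mem_ker, Matrix.mulVecLin_apply, hM, Matrix.fromRows_mulVec]
      have hmod : (q * (w : (ZMod 2)[X])) %ₘ P = q * (w : (ZMod 2)[X]) :=
        (modByMonic_eq_self_iff hPm).2 (hPd ▸ hdq w)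
      have hvec : L w = fun i : Fin ℓ => ((q * (w : (ZMod 2)[X])) %ₘ P).coeff (i : ℕ) := by
        rw [hLapp w, hmod]
      have hcb : (circMat ℓ b).mulVec (L w) = 0 := by
        rw [hvec, circ_mulVec]
        obtain ⟨b', hb'⟩ := hgb
        have : P ∣ b * (q * (w : (ZMod 2)[X])) := ⟨b' * w, by rw [hq, hb']; ring⟩
        funext i
        rw [(modByMonic_eq_zero_iff_dvd hPm).2 this]
        simp
      have hca : (circMat ℓ a).mulVec (L w) = 0 := by
        rw [hvec, circ_mulVec]
        obtain ⟨a', ha'⟩ := hga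
        have : P ∣ a * (q * (w : (ZMod 2)[X])) := ⟨a' * w, by rw [hq, ha']; ring⟩
        funext i
        rw [(modByMonic_eq_zero_iff_dvd hPm).2 this]
        simp
      rw [hcb, hca]
      funext s; cases s <;> rfl
    · intro hx
      rw [hK, LinearMap.mem_ker, Matrix.mulVecLin_apply, hM, Matrix.fromRows_mulVec] at hx
      have hbx : (circMat ℓ b).mulVec x = 0 := by
        funext i; exact congrFun hx (Sum.inl i)
      have hax : (circMat ℓ a).mulVec x = 0 := by
        funext i; exact congrFun hx (Sum.inr i)
      -- the polynomial with coefficient vector x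
      set pw := (degreeLTEquiv (ZMod 2) ℓ).symm x with hpw
      set p : (ZMod 2)[X] := (pw : (ZMod 2)[X]) with hp
      have hpc : ∀ i : Fin ℓ, p.coeff (i : ℕ) = x i := by
        intro i
        have := congrFun ((degreeLTEquiv (ZMod 2) ℓ).apply_symm_apply x) i
        exact this
      have hpdeg : p.degree < (ℓ : ℕ) := mem_degreeLT.1 pw.2
      have hpmod : p %ₘ P = p := (modByMonic_eq_self_iff hPm).2 (hPd ▸ hpdeg)
      have hxv : (fun i : Fin ℓ => (p %ₘ P).coeff (i : ℕ)) = x := by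
        rw [hpmod]; funext i; exact hpc i
      have hdvd : ∀ c : (ZMod 2)[X], (circMat ℓ c).mulVec x = 0 → P ∣ c * p := by
        intro c hc
        rw [← hxv, circ_mulVec] at hc
        rw [← modByMonic_eq_zero_iff_dvd hPm]
        refine eq_zero_of_coeffs _ (hPd ▸ degree_modByMonic_lt _ hPm) fun i => ?_
        exact congrFun hc i
      have hPgp : P ∣ g * p := bezout p (hdvd a hax) (hdvd b hbx)
      have hqp : q ∣ p := by
        rw [hq] at hPgp
        exact (mul_dvd_mul_iff_left hg0).1 hPgp
      obtain ⟨w, hw⟩ := hqp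
      have hwmem : w ∈ degreeLT (ZMod 2) d := by
        rw [mem_degreeLT]
        rcases eq_or_ne w 0 with rfl | hw0
        · simp only [degree_zero]; exact WithBot.bot_lt_coe _
        · have hp0 : p ≠ 0 := by rw [hw]; exact mul_ne_zero hq0 hw0
          have h1 : p.natDegree < ℓ := (natDegree_lt_iff_degree_lt hp0).2 hpdeg
          have h2 : p.natDegree = q.natDegree + w.natDegree := by
            rw [hw, natDegree_mul hq0 hw0]
          rw [← natDegree_lt_iff_degree_lt hw0]
          omega
      refine ⟨⟨w, hwmem⟩, ?_⟩
      rw [hLapp]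
      funext i
      rw [← hw]
      exact hpc i
  -- finrank of the kernel
  have hfk : Module.finrank (ZMod 2) K = d := by
    rw [← hrange]
    rw [← LinearEquiv.finrank_eq (LinearEquiv.ofInjective L hLinj)]
    rw [(degreeLTEquiv (ZMod 2) d).finrank_eq]
    simp
  have hrank : M.rank + Module.finrank (ZMod 2) K = ℓ := by
    rw [Matrix.rank, hK]
    rw [LinearMap.finrank_range_add_finrank_ker M.mulVecLin]
    simp
  omega
end

section
/- (Proposition 1: dimension of generalized bicycle codes.) Let ℓ ≥ 1, let a(x), b(x) ∈ 𝔽₂[x], let A and B be the ℓ×ℓ circulant matrices over 𝔽₂ associated to a(x) and b(x), and set H_X = [A | B] and H_Z = [Bᵀ | Aᵀ]. Then the dimension k = 2ℓ − rank(H_X) − rank(H_Z) of the corresponding CSS code of length 2ℓ satisfies k = 2·deg g(x), where g(x) = gcd(a(x), b(x), xˡ − 1). -/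
open Polynomial Matrix AdjoinRoot Module
set_option linter.unusedSectionVars false
set_option maxHeartbeats 1000000

section GBaux
variable (ℓ : ℕ) [NeZero ℓ]

private noncomputable abbrev fP : Polynomial (ZMod 2) := X ^ ℓ - 1

private lemma f_monic : (fP ℓ).Monic := by
  simpa using Polynomial.monic_X_pow_sub_C (1 : ZMod 2) (NeZero.ne ℓ)

private lemma f_ne : (fP ℓ) ≠ 0 := (f_monic ℓ).ne_zero

private lemma f_deg : (fP ℓ).natDegree = ℓ := by
  simpa using Polynomial.natDegree_X_pow_sub_C (n := ℓ) (r := (1 : ZMod 2))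

private noncomputable def gbBas : Basis (Fin ℓ) (ZMod 2) (AdjoinRoot (fP ℓ)) :=
  (AdjoinRoot.powerBasis (f_ne ℓ)).basis.reindex
    (finCongr (by rw [AdjoinRoot.powerBasis_dim, f_deg]))

private lemma gbBas_apply (i : Fin ℓ) : gbBas ℓ i = root (fP ℓ) ^ (i : ℕ) := by
  rw [gbBas, Basis.reindex_apply, PowerBasis.basis_eq_pow, AdjoinRoot.powerBasis_gen]
  simp

private lemma root_pow_ℓ : root (fP ℓ) ^ ℓ = 1 := by
  have h := AdjoinRoot.mk_self (f := fP ℓ)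
  rw [show (fP ℓ) = X ^ ℓ - 1 from rfl, map_sub, map_pow, AdjoinRoot.mk_X, _root_.map_one,
    sub_eq_zero] at h
  exact h

private lemma root_pow_mod (m : ℕ) : root (fP ℓ) ^ m = root (fP ℓ) ^ (m % ℓ) := by
  conv_lhs => rw [← Nat.mod_add_div m ℓ]
  rw [pow_add, pow_mul, root_pow_ℓ, one_pow, mul_one]

end GBaux

section GBaux2
variable (ℓ : ℕ) [NeZero ℓ]

private lemma toLin_circ (a : Polynomial (ZMod 2)) :
    Matrix.toLin (gbBas ℓ) (gbBas ℓ) (circMat ℓ a)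
      = LinearMap.mulLeft (ZMod 2) (AdjoinRoot.mk (fP ℓ) a) := by
  apply (gbBas ℓ).ext
  intro j
  rw [Matrix.toLin_self, LinearMap.mulLeft_apply]
  set r := a %ₘ (fP ℓ) with hr
  have hmk : AdjoinRoot.mk (fP ℓ) a = AdjoinRoot.mk (fP ℓ) r := by
    conv_lhs => rw [← modByMonic_add_div a (fP ℓ)]
    rw [map_add, _root_.map_mul, AdjoinRoot.mk_self, zero_mul, add_zero]
  have hrdeg : r.natDegree < ℓ := by
    rcases eq_or_ne r 0 with h | h
    · simp [h, Nat.pos_of_ne_zero (NeZero.ne ℓ)]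
    · have h1 := Polynomial.degree_modByMonic_lt a (f_monic ℓ)
      have h2 : (fP ℓ).degree = (ℓ : ℕ) := by
        rw [Polynomial.degree_eq_natDegree (f_ne ℓ), f_deg]
      rw [← hr, h2] at h1
      exact_mod_cast (Polynomial.degree_eq_natDegree h) ▸ h1
  have hsum : AdjoinRoot.mk (fP ℓ) r = ∑ k ∈ Finset.range ℓ, r.coeff k • root (fP ℓ) ^ k := by
    conv_lhs => rw [r.as_sum_range' ℓ hrdeg]
    rw [map_sum]
    refine Finset.sum_congr rfl fun k _ => ?_
    rw [← Polynomial.C_mul_X_pow_eq_monomial, _root_.map_mul, map_pow, AdjoinRoot.mk_X,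
      AdjoinRoot.mk_C, Algebra.smul_def, AdjoinRoot.algebraMap_eq]
  rw [hmk, gbBas_apply, hsum, Finset.sum_mul,
    ← Fin.sum_univ_eq_sum_range (fun k => (r.coeff k • root (fP ℓ) ^ k) * root (fP ℓ) ^ (j : ℕ)) ℓ]
  symm
  apply Fintype.sum_equiv (Equiv.addRight j)
  intro k
  rw [smul_mul_assoc, ← pow_add, root_pow_mod ℓ ((k : ℕ) + (j : ℕ)), ← Fin.val_add,
    gbBas_apply]
  simp only [Equiv.coe_addRight]
  have hkk : ((k + j - j : Fin ℓ)) = k := by rw [add_sub_cancel_right]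
  show _ = (a %ₘ (X ^ ℓ - 1)).coeff ((k + j - j : Fin ℓ) : ℕ) • _
  rw [hkk]

end GBaux2

section Blocks
variable {R M : Type*} [CommRing R] [AddCommGroup M] [Module R M] {ℓ : ℕ}

private lemma toLin_fromColumns (b : Basis (Fin ℓ) R M) (A B : Matrix (Fin ℓ) (Fin ℓ) R) :
    Matrix.toLin (b.prod b) b (Matrix.fromCols A B)
      = (Matrix.toLin b b A).coprod (Matrix.toLin b b B) := by
  apply (b.prod b).ext
  rintro (j | j) <;>
    · rw [Matrix.toLin_self]
      simp [Basis.prod_apply, Matrix.fromCols, Matrix.toLin_self]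

private lemma toLin_fromRows (b : Basis (Fin ℓ) R M) (A B : Matrix (Fin ℓ) (Fin ℓ) R) :
    Matrix.toLin b (b.prod b) (Matrix.fromRows A B)
      = (Matrix.toLin b b A).prod (Matrix.toLin b b B) := by
  apply b.ext
  intro j
  rw [Matrix.toLin_self]
  rw [Fintype.sum_sum_type]
  simp [Basis.prod_apply, Matrix.toLin_self, Prod.ext_iff,
    Prod.fst_sum, Prod.snd_sum, Matrix.fromRows_apply_inl, Matrix.fromRows_apply_inr]

end Blocks

private lemma range_mulLeft {S : Type*} [CommRing S] [Algebra (ZMod 2) S] (x : S) :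
    LinearMap.range (LinearMap.mulLeft (ZMod 2) x)
      = Submodule.restrictScalars (ZMod 2) (Ideal.span {x}) := by
  ext z
  constructor
  · rintro ⟨y, rfl⟩
    exact Ideal.mem_span_singleton.mpr ⟨y, rfl⟩
  · intro h
    rw [Submodule.restrictScalars_mem, Ideal.mem_span_singleton] at h
    obtain ⟨c, rfl⟩ := h
    exact ⟨c, rfl⟩

private lemma restr_sup {S : Type*} [CommRing S] [Algebra (ZMod 2) S] (I J : Ideal S) :
    Submodule.restrictScalars (ZMod 2) I ⊔ Submodule.restrictScalars (ZMod 2) J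
      = Submodule.restrictScalars (ZMod 2) (I ⊔ J) := by
  apply le_antisymm
  · apply sup_le
    · intro x hx; exact Ideal.mem_sup_left hx
    · intro x hx; exact Ideal.mem_sup_right hx
  · intro x hx
    rw [Submodule.restrictScalars_mem, Submodule.mem_sup] at hx
    obtain ⟨y, hy, z, hz, rfl⟩ := hx
    exact Submodule.add_mem _ (Submodule.mem_sup_left hy) (Submodule.mem_sup_right hz)

private lemma finrank_span_mk (f d : Polynomial (ZMod 2)) (hf : f.Monic) (hd : d ≠ 0)
    (hdvd : d ∣ f) :
    finrank (ZMod 2) (Submodule.restrictScalars (ZMod 2)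
      (Ideal.span {AdjoinRoot.mk f d} : Ideal (AdjoinRoot f)))
      = f.natDegree - d.natDegree := by
  haveI : Module.Finite (ZMod 2) (AdjoinRoot f) :=
    Module.Finite.of_basis (AdjoinRoot.powerBasis hf.ne_zero).basis
  have hfr : finrank (ZMod 2) (AdjoinRoot f) = f.natDegree := by
    rw [(AdjoinRoot.powerBasis hf.ne_zero).finrank, AdjoinRoot.powerBasis_dim]
  have hle : (Ideal.span {f} : Ideal (Polynomial (ZMod 2))) ≤ Ideal.span {d} :=
    Ideal.span_singleton_le_span_singleton.mpr hdvd
  have hJ : (Ideal.span {AdjoinRoot.mk f d} : Ideal (AdjoinRoot f))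
      = Ideal.map (Ideal.Quotient.mkₐ (ZMod 2) (Ideal.span {f})) (Ideal.span {d}) := by
    rw [Ideal.map_span, Set.image_singleton]
    rfl
  have e2 := DoubleQuot.quotQuotEquivQuotOfLEₐ (ZMod 2) hle
  have hqd : finrank (ZMod 2)
      (Polynomial (ZMod 2) ⧸ (Ideal.span {d} : Ideal (Polynomial (ZMod 2)))) = d.natDegree := by
    have : finrank (ZMod 2) (AdjoinRoot d) = d.natDegree := by
      rw [(AdjoinRoot.powerBasis hd).finrank, AdjoinRoot.powerBasis_dim]
    exact this
  set J : Ideal (AdjoinRoot f) := Ideal.span {AdjoinRoot.mk f d} with hJ'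
  have hquot : finrank (ZMod 2) (AdjoinRoot f ⧸ Submodule.restrictScalars (ZMod 2) J)
      = d.natDegree := by
    rw [(Submodule.Quotient.restrictScalarsEquiv (ZMod 2) J).finrank_eq]
    rw [← hqd]
    exact (hJ ▸ e2.toLinearEquiv.finrank_eq : _)
  have hsum := Submodule.finrank_quotient_add_finrank (Submodule.restrictScalars (ZMod 2) J)
  rw [hquot, hfr] at hsum
  have hdle : d.natDegree ≤ f.natDegree :=
    Polynomial.natDegree_le_of_dvd hdvd hf.ne_zero
  omega

/-- **Proposition 1.** For the generalized bicycle code with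
`H_X = [A | B]` and `H_Z = [Bᵀ | Aᵀ]`, where `A`, `B` are the circulants of `a(x)`, `b(x)`,
the CSS dimension `k = 2ℓ − rank H_X − rank H_Z` equals `2·deg g(x)`, where
`g(x) = gcd(a(x), b(x), xˡ − 1)`. -/
theorem gb_code_dimension (ℓ : ℕ) (hℓ : 1 ≤ ℓ) (a b g : Polynomial (ZMod 2))
    (hg : g = EuclideanDomain.gcd a (EuclideanDomain.gcd b (X ^ ℓ - 1))) :
    2 * ℓ - (Matrix.fromCols (circMat ℓ a) (circMat ℓ b)).rank
      - (Matrix.fromCols (circMat ℓ b)ᵀ (circMat ℓ a)ᵀ).rank = 2 * g.natDegree := by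
  haveI : NeZero ℓ := ⟨by omega⟩
  -- gcd facts
  have hGa : g ∣ a := hg ▸ EuclideanDomain.gcd_dvd_left _ _
  have hGb : g ∣ b :=
    hg ▸ (EuclideanDomain.gcd_dvd_right a _).trans (EuclideanDomain.gcd_dvd_left b _)
  have hGf : g ∣ fP ℓ :=
    hg ▸ (EuclideanDomain.gcd_dvd_right a _).trans (EuclideanDomain.gcd_dvd_right b _)
  have hgne : g ≠ 0 := by
    intro h
    rw [hg] at h
    rcases (EuclideanDomain.gcd_eq_zero_iff).mp h with ⟨-, h2⟩
    rcases (EuclideanDomain.gcd_eq_zero_iff).mp h2 with ⟨-, h3⟩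
    exact f_ne ℓ h3
  obtain ⟨f', hff'⟩ := hGf
  have hf'ne : f' ≠ 0 := by
    intro h
    apply f_ne ℓ
    rw [hff', h, mul_zero]
  have hdegf : (fP ℓ).natDegree = g.natDegree + f'.natDegree := by
    rw [hff', Polynomial.natDegree_mul hgne hf'ne]
  have hgdeg : g.natDegree ≤ ℓ := by
    have := Polynomial.natDegree_le_of_dvd ⟨f', hff'⟩ (f_ne ℓ)
    rwa [f_deg] at this
  -- Bezout
  have hBez : ∃ s t u : Polynomial (ZMod 2), g = a * s + b * t + (fP ℓ) * u := by
    obtain ⟨s1, v1, h1⟩ : ∃ s1 v1, g = a * s1 + EuclideanDomain.gcd b (fP ℓ) * v1 :=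
      ⟨_, _, by rw [hg]; exact EuclideanDomain.gcd_eq_gcd_ab _ _⟩
    obtain ⟨s2, v2, h2⟩ : ∃ s2 v2, EuclideanDomain.gcd b (fP ℓ) = b * s2 + fP ℓ * v2 :=
      ⟨_, _, EuclideanDomain.gcd_eq_gcd_ab _ _⟩
    refine ⟨s1, s2 * v1, v2 * v1, ?_⟩
    rw [h1, h2]
    ring
  obtain ⟨s, t, u, hBez⟩ := hBez
  haveI : FiniteDimensional (ZMod 2) (AdjoinRoot (fP ℓ)) := Module.Finite.of_basis (gbBas ℓ)
  have hfrR : finrank (ZMod 2) (AdjoinRoot (fP ℓ)) = ℓ := by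
    rw [(AdjoinRoot.powerBasis (f_ne ℓ)).finrank, AdjoinRoot.powerBasis_dim, f_deg]
  -- rank of H_X
  have hXr : (Matrix.fromCols (circMat ℓ a) (circMat ℓ b)).rank = ℓ - g.natDegree := by
    rw [Matrix.rank_eq_finrank_range_toLin _ (gbBas ℓ) ((gbBas ℓ).prod (gbBas ℓ)),
      toLin_fromColumns, toLin_circ, toLin_circ, LinearMap.range_coprod,
      range_mulLeft, range_mulLeft, restr_sup]
    have hsp : (Ideal.span {AdjoinRoot.mk (fP ℓ) a} ⊔ Ideal.span {AdjoinRoot.mk (fP ℓ) b}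
        : Ideal (AdjoinRoot (fP ℓ))) = Ideal.span {AdjoinRoot.mk (fP ℓ) g} := by
      rw [← Ideal.span_insert]
      apply le_antisymm
      · rw [Ideal.span_le]
        rintro x hx
        simp only [Set.mem_insert_iff, Set.mem_singleton_iff] at hx
        rcases hx with rfl | rfl
        · exact Ideal.mem_span_singleton.mpr (map_dvd _ hGa)
        · exact Ideal.mem_span_singleton.mpr (map_dvd _ hGb)
      · rw [Ideal.span_le, Set.singleton_subset_iff, SetLike.mem_coe, Ideal.mem_span_pair]
        refine ⟨AdjoinRoot.mk _ s, AdjoinRoot.mk _ t, ?_⟩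
        have h1 : AdjoinRoot.mk (fP ℓ) g = AdjoinRoot.mk (fP ℓ) (a * s + b * t + (fP ℓ) * u) := by
          rw [← hBez]
        rw [h1, map_add, map_add, _root_.map_mul, _root_.map_mul, _root_.map_mul,
          AdjoinRoot.mk_self, zero_mul, add_zero]
        ring
    rw [hsp, finrank_span_mk (fP ℓ) g (f_monic ℓ) hgne ⟨f', hff'⟩, f_deg]
  -- rank of H_Z
  have hZr : (Matrix.fromCols (circMat ℓ b)ᵀ (circMat ℓ a)ᵀ).rank = ℓ - g.natDegree := by
    rw [← Matrix.transpose_fromRows, Matrix.rank_transpose,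
      Matrix.rank_eq_finrank_range_toLin _ ((gbBas ℓ).prod (gbBas ℓ)) (gbBas ℓ),
      toLin_fromRows, toLin_circ, toLin_circ]
    set φ := (LinearMap.mulLeft (ZMod 2) (AdjoinRoot.mk (fP ℓ) b)).prod
      (LinearMap.mulLeft (ZMod 2) (AdjoinRoot.mk (fP ℓ) a)) with hφ
    have hker : LinearMap.ker φ
        = Submodule.restrictScalars (ZMod 2)
            (Ideal.span {AdjoinRoot.mk (fP ℓ) f'} : Ideal (AdjoinRoot (fP ℓ))) := by
      rw [hφ, LinearMap.ker_prod]
      ext z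
      rw [Submodule.mem_inf, LinearMap.mem_ker, LinearMap.mem_ker,
        Submodule.restrictScalars_mem]
      obtain ⟨p, rfl⟩ := AdjoinRoot.mk_surjective z
      rw [LinearMap.mulLeft_apply, LinearMap.mulLeft_apply, ← _root_.map_mul, ← _root_.map_mul,
        AdjoinRoot.mk_eq_zero, AdjoinRoot.mk_eq_zero, Ideal.mem_span_singleton]
      constructor
      · rintro ⟨hb2, ha2⟩
        have hgp : fP ℓ ∣ g * p := by
          have h2 : g * p = s * (a * p) + t * (b * p) + u * ((fP ℓ) * p) := by
            rw [hBez]; ring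
          rw [h2]
          exact dvd_add (dvd_add (ha2.mul_left s) (hb2.mul_left t))
            ((dvd_mul_right (fP ℓ) p).mul_left u)
        have : g * f' ∣ g * p := hff' ▸ hgp
        exact map_dvd _ ((mul_dvd_mul_iff_left hgne).mp this)
      · intro h
        obtain ⟨w, hw⟩ := h
        obtain ⟨q, rfl⟩ := AdjoinRoot.mk_surjective w
        rw [← _root_.map_mul, ← sub_eq_zero, ← map_sub, AdjoinRoot.mk_eq_zero] at hw
        have hp : f' ∣ p := by
          have h1 : f' ∣ p - f' * q := dvd_trans ⟨g, by rw [hff']; ring⟩ hw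
          have h2 : p = (p - f' * q) + f' * q := by ring
          rw [h2]
          exact dvd_add h1 (dvd_mul_right f' q)
        obtain ⟨q', hq'⟩ := hp
        obtain ⟨a', ha'⟩ := hGa
        obtain ⟨b', hb'⟩ := hGb
        constructor
        · exact ⟨b' * q', by rw [hq', hb', hff']; ring⟩
        · exact ⟨a' * q', by rw [hq', ha', hff']; ring⟩
    have hrn := LinearMap.finrank_range_add_finrank_ker φ
    rw [hker, finrank_span_mk (fP ℓ) f' (f_monic ℓ) hf'ne ⟨g, by rw [hff']; ring⟩,
      hfrR, hdegf] at hrn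
    omega
  rw [hXr, hZr]
  omega
end
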